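/- Let n ∈ ℕ, g : Fin n → ℝ and W : ℝ, and suppose the knapsack feasible set K := {c : Fin n → Bool | Σ_{i with c i = true} g i ≤ W} is nonempty. Then there exists a binary decision tree t over n real-valued features with Boolean labels such that (i) for every c : Fin n → Bool, eval t (ι c) = true if and only if c ∈ K, and (ii) the minimum, over all c : Fin n → Bool with eval t (ι c) = true, of the number of coordinates where ι c differs from the all-ones vector (its L0 distance to ι of the all-true selection) equals n minus the maximum of #{i : c i = true} over c ∈ K. Hence solving the minimal-L0 search problem on t solves the 0-1 knapsack instance. -/

import Mathlib

/-- A binary decision tree over `n` real-valued features with labels in `Y`. -/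
inductive DTree (n : ℕ) (Y : Type) where
  | leaf (y : Y) : DTree n Y
  | node (f : Fin n) (b : ℝ) (L R : DTree n Y) : DTree n Y

namespace DTree

/-- Evaluation of a decision tree on an input. -/
noncomputable def eval {n : ℕ} {Y : Type} : DTree n Y → (Fin n → ℝ) → Y
  | .leaf y, _ => y
  | .node f b L R, x => if x f ≤ b then eval L x else eval R x

end DTree

/-- The 0/1 embedding of a Boolean vector into real-valued inputs. -/
def boolEmbed {n : ℕ} (c : Fin n → Bool) : Fin n → ℝ :=
  fun i => if c i then 1 else 0

open Classical in
/-- L0 (Hamming) distance between two real-valued inputs: the number of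
coordinates in which they differ. -/
noncomputable def l0dist {n : ℕ} (x z : Fin n → ℝ) : ℕ :=
  (Finset.univ.filter (fun i => x i ≠ z i)).card

open Classical in
/-- Feasibility for the 0-1 knapsack instance with weights `g` and capacity `W`. -/
def knapFeasible {n : ℕ} (g : Fin n → ℝ) (W : ℝ) (c : Fin n → Bool) : Prop :=
  ∑ i ∈ Finset.univ.filter (fun i => c i = true), g i ≤ W

/-- Value of a 0-1 selection (unit values): number of chosen items. -/
def knapValue {n : ℕ} (c : Fin n → Bool) : ℕ :=
  (Finset.univ.filter (fun i => c i = true)).card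

/-
Every Boolean function is computed on 0/1 inputs by the complete decision tree that splits on
each feature at threshold 1/2. An optimal knapsack selection maximises the number of chosen items,
which is `n` minus its Hamming distance to the all-ones vector, so the closest accepted input to
the all-ones vector is an optimal selection.
-/

lemma boolEmbed_le_half_iff {n : ℕ} (c : Fin n → Bool) (i : Fin n) :
    boolEmbed c i ≤ 1 / 2 ↔ c i = false := by
  cases h : c i <;> norm_num [boolEmbed, h]

namespace DTree

variable {n : ℕ} {Y : Type}

noncomputable def ofBoolFun (F : (Fin n → Bool) → Y) : List (Fin n) → (Fin n → Bool) → DTree n Y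
  | [], acc => .leaf (F acc)
  | i :: l, acc =>
    .node i (1 / 2) (ofBoolFun F l (Function.update acc i false))
      (ofBoolFun F l (Function.update acc i true))

lemma eval_ofBoolFun_boolEmbed (F : (Fin n → Bool) → Y) (l : List (Fin n))
    (acc c : Fin n → Bool) (hagree : ∀ j ∉ l, acc j = c j) :
    (ofBoolFun F l acc).eval (boolEmbed c) = F c := by
  induction l generalizing acc with
  | nil => exact congrArg F (funext fun j => hagree j List.not_mem_nil)
  | cons i l ih =>
    have hupdate : ∀ j ∉ l, Function.update acc i (c i) j = c j := by
      intro j hj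
      by_cases hji : j = i
      · subst hji; exact Function.update_self ..
      · rw [Function.update_of_ne hji]
        exact hagree j (by simp [hji, hj])
    cases hci : c i with
    | false =>
      rw [hci] at hupdate
      simp only [ofBoolFun, eval, (boolEmbed_le_half_iff c i).2 hci, if_true]
      exact ih _ hupdate
    | true =>
      rw [hci] at hupdate
      have : ¬ boolEmbed c i ≤ 1 / 2 := by rw [boolEmbed_le_half_iff, hci]; decide
      simp only [ofBoolFun, eval, this, if_false]
      exact ih _ hupdate

theorem exists_eval_boolEmbed_eq (F : (Fin n → Bool) → Y) :
    ∃ t : DTree n Y, ∀ c, t.eval (boolEmbed c) = F c :=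
  ⟨ofBoolFun F (List.finRange n) fun _ => false, fun c =>
    eval_ofBoolFun_boolEmbed F _ _ c fun j hj => absurd (List.mem_finRange j) hj⟩

end DTree

lemma l0dist_boolEmbed_true {n : ℕ} (c : Fin n → Bool) :
    l0dist (boolEmbed c) (boolEmbed fun _ => true) = n - knapValue c := by
  classical
  have hdiff : ∀ i, boolEmbed c i ≠ boolEmbed (fun _ => true) i ↔ ¬ c i = true := by
    intro i; cases h : c i <;> norm_num [boolEmbed, h]
  simp only [l0dist, hdiff, Finset.filter_not, knapValue,
    Finset.card_sdiff_of_subset (Finset.filter_subset _ _), Finset.card_univ, Fintype.card_fin]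

lemma Nat.sInf_image_of_antitone {φ : ℕ → ℕ} (hφ : Antitone φ) {T : Set ℕ}
    (hne : T.Nonempty) (hbdd : BddAbove T) : sInf (φ '' T) = φ (sSup T) :=
  (hφ.map_isGreatest ⟨Nat.sSup_mem hne hbdd, fun _ hm => le_csSup hbdd hm⟩).csInf_eq

theorem stmt8 {n : ℕ} (g : Fin n → ℝ) (W : ℝ)
    (hne : ∃ c : Fin n → Bool, knapFeasible g W c) :
    ∃ t : DTree n Bool,
      (∀ c : Fin n → Bool, t.eval (boolEmbed c) = true ↔ knapFeasible g W c) ∧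
      sInf ((fun c : Fin n → Bool => l0dist (boolEmbed c) (boolEmbed (fun _ => true))) ''
          {c : Fin n → Bool | t.eval (boolEmbed c) = true}) =
        n - sSup (knapValue '' {c : Fin n → Bool | knapFeasible g W c}) := by
  classical
  obtain ⟨t, ht⟩ := DTree.exists_eval_boolEmbed_eq fun c => decide (knapFeasible g W c)
  have hacc : ∀ c, t.eval (boolEmbed c) = true ↔ knapFeasible g W c := by simp [ht]
  refine ⟨t, hacc, ?_⟩
  obtain ⟨c₀, hc₀⟩ := hne
  have hfeas : {c | t.eval (boolEmbed c) = true} = {c | knapFeasible g W c} :=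
    Set.ext hacc
  rw [hfeas, funext l0dist_boolEmbed_true, ← Set.image_image (fun m => n - m)]
  exact Nat.sInf_image_of_antitone (fun _ _ h => Nat.sub_le_sub_left h n)
    ⟨_, c₀, hc₀, rfl⟩ (Set.toFinite _).bddAbove
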